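/- For all α, β > 0, set Γ_{(α,β)} := αℤ × βℤ ⊂ ℝ² and M_{α,β} := (Σ_{n∈ℤ} exp(−α²n²/(4ℓ²))) · (Σ_{n∈ℤ} exp(−β²n²/(4ℓ²))). Then for every φ ∈ ℋ₀: Σ_{γ∈Γ_{(α,β)}} |⟨χ_γ, φ⟩|² ≤ M_{α,β} · ‖φ‖². -/

import Mathlib

open MeasureTheory

/-- The normalized lowest-Landau-level wave function `ψ_m` (angular momentum `m`). -/
noncomputable def psiF (ℓ : ℝ) (m : ℕ) (x : EuclideanSpace ℝ (Fin 2)) : ℂ :=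
  ((1 / (ℓ * Real.sqrt (2 * Real.pi * m.factorial)) : ℝ) : ℂ) *
    (((x 0 : ℂ) - Complex.I * (x 1 : ℂ)) / ((ℓ : ℂ) * ((Real.sqrt 2 : ℝ) : ℂ))) ^ m *
    ((Real.exp (-‖x‖ ^ 2 / (4 * ℓ ^ 2)) : ℝ) : ℂ)

/-- The magnetic coherent state `χ_γ` centred at `γ`. -/
noncomputable def chiF (ℓ : ℝ) (γ x : EuclideanSpace ℝ (Fin 2)) : ℂ :=
  ((1 / (ℓ * Real.sqrt (2 * Real.pi)) : ℝ) : ℂ) *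
    Complex.exp (-Complex.I * ((γ 0 * x 1 - γ 1 * x 0 : ℝ) : ℂ) / (2 * (ℓ : ℂ) ^ 2)) *
    ((Real.exp (-‖x - γ‖ ^ 2 / (4 * ℓ ^ 2)) : ℝ) : ℂ)

/-- The point `(α m, β n)` of the lattice `αℤ × βℤ ⊂ ℝ²`. -/
noncomputable def latticePt (α β : ℝ) (p : ℤ × ℤ) : EuclideanSpace ℝ (Fin 2) :=
  (WithLp.equiv 2 (Fin 2 → ℝ)).symm ![α * (p.1 : ℝ), β * (p.2 : ℝ)]

/-!
Schur test: if the Gram matrix of a family `(vᵢ)` has absolute row sums at most `M`, then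
`∑ |⟪vᵢ, φ⟫|² ≤ M ‖φ‖²`; indeed for `w = ∑ ⟪vᵢ, φ⟫ vᵢ` the sum `S` equals `⟪w, φ⟫ ≤ ‖w‖ ‖φ‖`
while `‖w‖² ≤ M S`. For the magnetic coherent states a Gaussian integral gives
`|⟪χ_γ, χ_γ'⟫| = exp (-|γ - γ'|² / (4ℓ²))`, and on `αℤ × βℤ` this kernel factorises into two
one-dimensional theta sums, so every row sum is exactly `M_{α,β}`.
-/

section SchurTest

variable {𝕜 E ι : Type*} [RCLike 𝕜] [NormedAddCommGroup E] [InnerProductSpace 𝕜 E]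

theorem Finset.sum_sum_mul_mul_le_of_row_sum_le {a : ι → ℝ} {G : ι → ι → ℝ} {M : ℝ}
    (F : Finset ι) (hG : ∀ i j, 0 ≤ G i j) (hsymm : ∀ i j, G i j = G j i)
    (hrow : ∀ i ∈ F, ∑ j ∈ F, G i j ≤ M) :
    ∑ i ∈ F, ∑ j ∈ F, a i * a j * G i j ≤ M * ∑ i ∈ F, a i ^ 2 := by
  calc ∑ i ∈ F, ∑ j ∈ F, a i * a j * G i j
      ≤ ∑ i ∈ F, ∑ j ∈ F, (a i ^ 2 * G i j + a j ^ 2 * G j i) / 2 := by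
        gcongr with i _ j _
        rw [hsymm j i]
        nlinarith [hG i j, mul_nonneg (sq_nonneg (a i - a j)) (hG i j)]
    _ = ∑ i ∈ F, a i ^ 2 * ∑ j ∈ F, G i j := by
        simp only [← Finset.sum_div, Finset.sum_add_distrib, Finset.mul_sum]
        rw [Finset.sum_comm (f := fun i j => a j ^ 2 * G j i)]
        ring
    _ ≤ ∑ i ∈ F, a i ^ 2 * M := by
        gcongr with i hi
        exact hrow i hi
    _ = M * ∑ i ∈ F, a i ^ 2 := by rw [← Finset.sum_mul, mul_comm]

theorem norm_sum_smul_sq_le_of_row_sum_le (v : ι → E) (c : ι → 𝕜) {M : ℝ} (F : Finset ι)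
    (hrow : ∀ i ∈ F, ∑ j ∈ F, ‖(inner 𝕜 (v i) (v j) : 𝕜)‖ ≤ M) :
    ‖∑ i ∈ F, c i • v i‖ ^ 2 ≤ M * ∑ i ∈ F, ‖c i‖ ^ 2 := by
  set w := ∑ i ∈ F, c i • v i
  calc ‖w‖ ^ 2 ≤ ‖(inner 𝕜 w w : 𝕜)‖ := by
        rw [← inner_self_eq_norm_sq (𝕜 := 𝕜)]; exact RCLike.re_le_norm _
    _ ≤ ∑ i ∈ F, ∑ j ∈ F, ‖c i‖ * ‖c j‖ * ‖(inner 𝕜 (v i) (v j) : 𝕜)‖ := by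
        rw [sum_inner]
        refine (norm_sum_le F _).trans (Finset.sum_le_sum fun i _ => ?_)
        rw [inner_smul_left, inner_sum, norm_mul, RCLike.norm_conj]
        simp_rw [mul_assoc, ← Finset.mul_sum]
        gcongr
        refine (norm_sum_le F _).trans_eq (Finset.sum_congr rfl fun j _ => ?_)
        rw [inner_smul_right, norm_mul]
    _ ≤ M * ∑ i ∈ F, ‖c i‖ ^ 2 :=
        Finset.sum_sum_mul_mul_le_of_row_sum_le F (fun _ _ => norm_nonneg _)
          (fun i j => norm_inner_symm (v i) (v j)) hrow

theorem sum_norm_inner_sq_le_of_row_sum_le (v : ι → E) {M : ℝ} (hM : 0 ≤ M) (F : Finset ι)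
    (hrow : ∀ i ∈ F, ∑ j ∈ F, ‖(inner 𝕜 (v i) (v j) : 𝕜)‖ ≤ M) (φ : E) :
    ∑ i ∈ F, ‖(inner 𝕜 (v i) φ : 𝕜)‖ ^ 2 ≤ M * ‖φ‖ ^ 2 := by
  set c : ι → 𝕜 := fun i => inner 𝕜 (v i) φ
  set S := ∑ i ∈ F, ‖c i‖ ^ 2
  set w := ∑ i ∈ F, c i • v i
  have hS : 0 ≤ S := Finset.sum_nonneg fun _ _ => sq_nonneg _
  have hSw : S ≤ ‖w‖ * ‖φ‖ := by
    have : (inner 𝕜 w φ : 𝕜) = (S : 𝕜) := by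
      simp only [w, S, sum_inner, inner_smul_left, c, RCLike.conj_mul]
      push_cast; rfl
    calc S = ‖(inner 𝕜 w φ : 𝕜)‖ := by rw [this, RCLike.norm_ofReal, abs_of_nonneg hS]
      _ ≤ ‖w‖ * ‖φ‖ := norm_inner_le_norm w φ
  have hw := norm_sum_smul_sq_le_of_row_sum_le v c F hrow
  rcases hS.eq_or_lt with hS0 | hSpos
  · rw [← hS0]; positivity
  · have : S * S ≤ S * (M * ‖φ‖ ^ 2) := by
      calc S * S ≤ ‖w‖ ^ 2 * ‖φ‖ ^ 2 := by nlinarith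
        _ ≤ M * S * ‖φ‖ ^ 2 := by gcongr
        _ = S * (M * ‖φ‖ ^ 2) := by ring
    exact le_of_mul_le_mul_left this hSpos

theorem exists_hasSum_norm_inner_sq_le_of_row_sum_le [Nonempty ι] (v : ι → E) {M : ℝ}
    (hrow : ∀ i (F : Finset ι), ∑ j ∈ F, ‖(inner 𝕜 (v i) (v j) : 𝕜)‖ ≤ M) (φ : E) :
    ∃ s, HasSum (fun i => ‖(inner 𝕜 (v i) φ : 𝕜)‖ ^ 2) s ∧ s ≤ M * ‖φ‖ ^ 2 := by
  have hM : 0 ≤ M := by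
    simpa using hrow (Classical.arbitrary ι) ∅
  have hfin F := sum_norm_inner_sq_le_of_row_sum_le v hM F (fun i _ => hrow i F) φ
  have hsum := summable_of_sum_le (fun _ => sq_nonneg _) hfin
  exact ⟨_, hsum.hasSum, hsum.tsum_le_of_sum_le hfin⟩

end SchurTest

theorem integral_euclideanSpace_fin_two_mul (f g : ℝ → ℂ) :
    ∫ x : EuclideanSpace ℝ (Fin 2), f (x 0) * g (x 1) = (∫ u, f u) * ∫ u, g u := by
  rw [← (PiLp.volume_preserving_toLp (Fin 2)).integral_comp
      (MeasurableEquiv.toLp 2 (Fin 2 → ℝ)).measurableEmbedding,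
    ← (volume_preserving_finTwoArrow ℝ).symm.integral_comp
      (MeasurableEquiv.finTwoArrow.symm.measurableEmbedding)]
  simpa [Measure.volume_eq_prod] using integral_prod_mul (μ := volume) (ν := volume) f g

theorem EuclideanSpace.norm_sq_fin_two (x : EuclideanSpace ℝ (Fin 2)) :
    ‖x‖ ^ 2 = x 0 ^ 2 + x 1 ^ 2 := by
  simp [EuclideanSpace.real_norm_sq_eq, Fin.sum_univ_two]

section CoherentStates

open Complex ComplexConjugate

noncomputable def cexpQuadratic (a p q d u : ℝ) : ℂ :=
  cexp (-a * u ^ 2 + (p + q * I) * u + d)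

theorem norm_integral_cexpQuadratic {a : ℝ} (ha : 0 < a) (p q d : ℝ) :
    ‖∫ u, cexpQuadratic a p q d u‖
      = Real.sqrt (Real.pi / a) * Real.exp (d + (p ^ 2 - q ^ 2) / (4 * a)) := by
  have hre : (-(a : ℂ)).re < 0 := by simpa using ha
  simp only [cexpQuadratic]
  rw [integral_cexp_quadratic hre, norm_mul, neg_neg, ← ofReal_div,
    norm_cpow_eq_rpow_re_of_pos (by positivity), norm_exp, Real.sqrt_eq_rpow]
  congr 2
  · norm_num
  · have hc : ((p : ℂ) + q * I) ^ 2 = ((p ^ 2 - q ^ 2 : ℝ) : ℂ) + ((2 * p * q : ℝ) : ℂ) * I := by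
      push_cast; ring_nf; rw [I_sq]; ring
    rw [hc, show (4 : ℂ) * -(a : ℂ) = ((-4 * a : ℝ) : ℂ) by push_cast; ring]
    simp only [sub_re, ofReal_re, div_ofReal_re, add_re, re_ofReal_mul, I_re, mul_zero, add_zero]
    field_simp
    ring

theorem conj_chiF_mul_chiF (ℓ : ℝ) (γ γ' x : EuclideanSpace ℝ (Fin 2)) :
    conj (chiF ℓ γ x) * chiF ℓ γ' x =
      ((1 / (2 * Real.pi * ℓ ^ 2) : ℝ) : ℂ) *
        (cexpQuadratic (1 / (2 * ℓ ^ 2)) ((γ 0 + γ' 0) / (2 * ℓ ^ 2)) ((γ' 1 - γ 1) / (2 * ℓ ^ 2))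
            (-(γ 0 ^ 2 + γ' 0 ^ 2) / (4 * ℓ ^ 2)) (x 0) *
          cexpQuadratic (1 / (2 * ℓ ^ 2)) ((γ 1 + γ' 1) / (2 * ℓ ^ 2)) ((γ 0 - γ' 0) / (2 * ℓ ^ 2))
            (-(γ 1 ^ 2 + γ' 1 ^ 2) / (4 * ℓ ^ 2)) (x 1)) := by
  have hK : (1 / (ℓ * Real.sqrt (2 * Real.pi))) ^ 2 = 1 / (2 * Real.pi * ℓ ^ 2) := by
    rw [div_pow, mul_pow, Real.sq_sqrt (by positivity)]; ring
  have hregroup (k a b c d : ℂ) :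
      k * cexp a * cexp b * (k * cexp c * cexp d) = k ^ 2 * cexp (a + b + (c + d)) := by
    simp only [Complex.exp_add]; ring
  simp only [chiF, cexpQuadratic, EuclideanSpace.norm_sq_fin_two, map_mul, ← exp_conj, map_div₀,
    map_neg, conj_I, conj_ofReal, map_pow, map_ofNat, ofReal_exp, PiLp.sub_apply]
  rw [← hK, ofReal_pow, hregroup, ← Complex.exp_add]
  congr 2
  push_cast
  field_simp
  ring_nf

theorem norm_integral_conj_chiF_mul_chiF {ℓ : ℝ} (hℓ : ℓ ≠ 0) (γ γ' : EuclideanSpace ℝ (Fin 2)) :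
    ‖∫ x, conj (chiF ℓ γ x) * chiF ℓ γ' x‖ = Real.exp (-‖γ - γ'‖ ^ 2 / (4 * ℓ ^ 2)) := by
  have ha : 0 < 1 / (2 * ℓ ^ 2) := by positivity
  simp_rw [conj_chiF_mul_chiF, integral_const_mul]
  rw [integral_euclideanSpace_fin_two_mul, norm_mul, norm_mul,
    norm_integral_cexpQuadratic ha, norm_integral_cexpQuadratic ha, norm_real, Real.norm_eq_abs]
  have hsqrt : Real.sqrt (Real.pi / (1 / (2 * ℓ ^ 2))) ^ 2 = 2 * Real.pi * ℓ ^ 2 := by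
    rw [Real.sq_sqrt (by positivity)]; field_simp
  have hregroup (k r e₁ e₂ : ℝ) : k * (r * e₁ * (r * e₂)) = k * r ^ 2 * (e₁ * e₂) := by ring
  rw [abs_of_pos (by positivity), hregroup, hsqrt, one_div_mul_cancel (by positivity), one_mul,
    ← Real.exp_add, EuclideanSpace.norm_sq_fin_two]
  congr 1
  simp only [PiLp.sub_apply]
  field_simp
  ring

theorem norm_inner_eq_of_ae_eq_chiF {ℓ : ℝ} (hℓ : ℓ ≠ 0) {γ γ' : EuclideanSpace ℝ (Fin 2)}
    {f g : Lp ℂ 2 (volume : Measure (EuclideanSpace ℝ (Fin 2)))}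
    (hf : ⇑f =ᵐ[volume] chiF ℓ γ) (hg : ⇑g =ᵐ[volume] chiF ℓ γ') :
    ‖(inner ℂ f g : ℂ)‖ = Real.exp (-‖γ - γ'‖ ^ 2 / (4 * ℓ ^ 2)) := by
  rw [L2.inner_def, ← norm_integral_conj_chiF_mul_chiF hℓ γ γ']
  congr 1
  refine integral_congr_ae ?_
  filter_upwards [hf, hg] with x hfx hgx
  rw [hfx, hgx, RCLike.inner_apply']

end CoherentStates

theorem summable_exp_neg_mul_int_sq_div {a b : ℝ} (ha : 0 < a) (hb : 0 < b) :
    Summable fun n : ℤ => Real.exp (-a * n ^ 2 / b) := by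
  have hτ : 0 < ((a / (Real.pi * b) : ℝ) * Complex.I).im := by
    rw [Complex.im_ofReal_mul, Complex.I_im, mul_one]; positivity
  refine ((summable_jacobiTheta₂_term_iff 0 _).mpr hτ).norm.congr fun n => ?_
  rw [norm_jacobiTheta₂_term]
  simp only [Complex.mul_im, Complex.ofReal_re, Complex.I_im, Complex.ofReal_im, Complex.I_re,
    Complex.zero_im]
  congr 1
  field_simp
  ring

theorem latticePt_sub (α β : ℝ) (p q : ℤ × ℤ) :
    latticePt α β p - latticePt α β q = latticePt α β (p - q) := by
  ext i
  fin_cases i <;> simp [latticePt, mul_sub]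

theorem exp_neg_norm_latticePt_sq_div (α β c : ℝ) (r : ℤ × ℤ) :
    Real.exp (-‖latticePt α β r‖ ^ 2 / c)
      = Real.exp (-α ^ 2 * (r.1 : ℝ) ^ 2 / c) * Real.exp (-β ^ 2 * (r.2 : ℝ) ^ 2 / c) := by
  rw [← Real.exp_add, EuclideanSpace.norm_sq_fin_two]
  simp only [latticePt, WithLp.equiv_symm_apply, PiLp.toLp_apply, Matrix.cons_val_zero,
    Matrix.cons_val_one]
  ring_nf

theorem hasSum_exp_neg_norm_latticePt_sq_div {α β c : ℝ} (hα : α ≠ 0) (hβ : β ≠ 0) (hc : 0 < c) :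
    HasSum (fun r => Real.exp (-‖latticePt α β r‖ ^ 2 / c))
      ((∑' n : ℤ, Real.exp (-α ^ 2 * (n : ℝ) ^ 2 / c)) *
        ∑' n : ℤ, Real.exp (-β ^ 2 * (n : ℝ) ^ 2 / c)) := by
  have h₁ := summable_exp_neg_mul_int_sq_div (by positivity : 0 < α ^ 2) hc
  have h₂ := summable_exp_neg_mul_int_sq_div (by positivity : 0 < β ^ 2) hc
  simp_rw [exp_neg_norm_latticePt_sq_div]
  exact h₁.hasSum.mul h₂.hasSum
    (h₁.mul_of_nonneg h₂ (fun _ => (Real.exp_pos _).le) (fun _ => (Real.exp_pos _).le))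

theorem sum_exp_neg_norm_latticePt_sub_sq_div_le {α β c : ℝ} (hα : α ≠ 0) (hβ : β ≠ 0)
    (hc : 0 < c) (p : ℤ × ℤ) (F : Finset (ℤ × ℤ)) :
    ∑ q ∈ F, Real.exp (-‖latticePt α β p - latticePt α β q‖ ^ 2 / c)
      ≤ (∑' n : ℤ, Real.exp (-α ^ 2 * (n : ℝ) ^ 2 / c)) *
        ∑' n : ℤ, Real.exp (-β ^ 2 * (n : ℝ) ^ 2 / c) := by
  simp_rw [latticePt_sub]
  exact sum_le_hasSum F (fun _ _ => (Real.exp_pos _).le)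
    ((Equiv.subLeft p).hasSum_iff.mpr (hasSum_exp_neg_norm_latticePt_sq_div hα hβ hc))

theorem stmt_13_general (ℓ α β : ℝ) (hℓ : 0 < ℓ) (hα : 0 < α) (hβ : 0 < β)
    (X : EuclideanSpace ℝ (Fin 2) → Lp ℂ 2 (volume : Measure (EuclideanSpace ℝ (Fin 2))))
    (hX : ∀ γ : EuclideanSpace ℝ (Fin 2), ⇑(X γ) =ᵐ[volume] chiF ℓ γ)
    (φ : Lp ℂ 2 (volume : Measure (EuclideanSpace ℝ (Fin 2)))) :
    ∃ s : ℝ,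
      HasSum (fun p : ℤ × ℤ => ‖(inner ℂ (X (latticePt α β p)) φ : ℂ)‖ ^ 2) s ∧
      s ≤ (∑' n : ℤ, Real.exp (-α ^ 2 * (n : ℝ) ^ 2 / (4 * ℓ ^ 2))) *
            (∑' n : ℤ, Real.exp (-β ^ 2 * (n : ℝ) ^ 2 / (4 * ℓ ^ 2))) * ‖φ‖ ^ 2 := by
  refine exists_hasSum_norm_inner_sq_le_of_row_sum_le (fun p => X (latticePt α β p))
    (fun p F => ?_) φ
  calc ∑ q ∈ F, ‖(inner ℂ (X (latticePt α β p)) (X (latticePt α β q)) : ℂ)‖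
      = ∑ q ∈ F, Real.exp (-‖latticePt α β p - latticePt α β q‖ ^ 2 / (4 * ℓ ^ 2)) :=
        Finset.sum_congr rfl fun q _ => norm_inner_eq_of_ae_eq_chiF hℓ.ne' (hX _) (hX _)
    _ ≤ _ := sum_exp_neg_norm_latticePt_sub_sq_div_le hα.ne' hβ.ne' (by positivity) p F

/-- Bessel bound for the magnetic Gabor family on the lattice
`Γ_{(α,β)} = αℤ × βℤ`:  for every `φ` in the lowest Landau level `ℋ₀`,
`Σ_{γ∈Γ_{(α,β)}} |⟨χ_γ, φ⟩|² ≤ M_{α,β} ‖φ‖²`, where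
`M_{α,β} = (Σ_{n∈ℤ} e^{-α²n²/(4ℓ²)}) (Σ_{n∈ℤ} e^{-β²n²/(4ℓ²)})`. -/
theorem stmt_13 (ℓ α β : ℝ) (hℓ : 0 < ℓ) (hα : 0 < α) (hβ : 0 < β)
    (Ψ : ℕ → Lp ℂ 2 (volume : Measure (EuclideanSpace ℝ (Fin 2))))
    (hΨ : ∀ m : ℕ, ⇑(Ψ m) =ᵐ[volume] psiF ℓ m)
    (X : EuclideanSpace ℝ (Fin 2) → Lp ℂ 2 (volume : Measure (EuclideanSpace ℝ (Fin 2))))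
    (hX : ∀ γ : EuclideanSpace ℝ (Fin 2), ⇑(X γ) =ᵐ[volume] chiF ℓ γ)
    (φ : Lp ℂ 2 (volume : Measure (EuclideanSpace ℝ (Fin 2))))
    (hφ : φ ∈ (Submodule.span ℂ (Set.range Ψ)).topologicalClosure) :
    ∃ s : ℝ,
      HasSum (fun p : ℤ × ℤ => ‖(inner ℂ (X (latticePt α β p)) φ : ℂ)‖ ^ 2) s ∧
      s ≤ (∑' n : ℤ, Real.exp (-α ^ 2 * (n : ℝ) ^ 2 / (4 * ℓ ^ 2))) *
            (∑' n : ℤ, Real.exp (-β ^ 2 * (n : ℝ) ^ 2 / (4 * ℓ ^ 2))) * ‖φ‖ ^ 2 :=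
  stmt_13_general ℓ α β hℓ hα hβ X hX φ
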